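/- arXiv:2404.00631 — 3 statements merged into one kernel-verified Lean document; each statement's English description precedes it below -/
import Mathlib

section
/- Let (Ω, ℙ) be a probability space, K, J positive integers, η > 0 and σ² > 0 real numbers. Let e_1, …, e_K : Ω → ℂ be square-integrable random variables and c_1, …, c_J ∈ ℂ constants. Let s_1, …, s_K, u_1, …, u_J : Ω → ℂ be mutually independent random variables, independent of (e_1, …, e_K), with zero mean and E[|s_i|²] = E[|u_j|²] = 1. Assume the random variable ω ↦ log(1 + η/(|∑_i e_i(ω) s_i(ω)|² + |∑_j c_j u_j(ω)|² + σ²)) is integrable. Then E[log₂(1 + η/(|∑_{i=1}^K e_i s_i|² + |∑_{j=1}^J c_j u_j|² + σ²))] ≥ log₂(1 + η/(∑_{i=1}^K E[|e_i|²] + ∑_{j=1}^J |c_j|² + σ²)). -/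
/-!
The map `x ↦ log (1 + η / (x + σ²))` is convex on `[0, ∞)`, so by Jensen's inequality the
expected rate is at least its value at the mean interference power `E[|∑ eᵢ sᵢ|² + |∑ cⱼ uⱼ|²]`.
That mean is computed exactly: the summands `eᵢ sᵢ` are orthogonal in `L²`, since independence
of symbols and coefficients factors `E[conj (eᵢ sᵢ) eⱼ sⱼ]` through `E[conj sᵢ sⱼ] = 0`, while
`E|eᵢ sᵢ|² = E|eᵢ|² E|sᵢ|² = E|eᵢ|²`. Constant coefficients `cⱼ` are a special case.
-/

open MeasureTheory ProbabilityTheory Set ComplexConjugate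

theorem convexOn_log_one_add_div_add {η b : ℝ} (hη : 0 ≤ η) :
    ConvexOn ℝ (Ioi (-b)) fun x => Real.log (1 + η / (x + b)) := by
  have hpos : ∀ x ∈ Ioi (-b), 0 < x + b := fun x hx => neg_lt_iff_pos_add.mp hx
  have hsplit : EqOn (fun x => Real.log (x + b + η) - Real.log (x + b))
      (fun x => Real.log (1 + η / (x + b))) (Ioi (-b)) := by
    intro x hx
    have hxb := hpos x hx
    dsimp only
    rw [← Real.log_div (by positivity) hxb.ne']
    congr 1
    field_simp
  have hf' : ∀ x ∈ Ioi (-b), HasDerivAt (fun x => Real.log (x + b + η) - Real.log (x + b))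
      ((x + b + η)⁻¹ - (x + b)⁻¹) x := by
    intro x hx
    have hxb := hpos x hx
    simpa [one_div] using (((hasDerivAt_id' x).add_const b).add_const η).log (by positivity)
      |>.fun_sub (((hasDerivAt_id' x).add_const b).log hxb.ne')
  have hf'' : ∀ x ∈ Ioi (-b), HasDerivAt (fun x => (x + b + η)⁻¹ - (x + b)⁻¹)
      (((x + b) ^ 2)⁻¹ - ((x + b + η) ^ 2)⁻¹) x := by
    intro x hx
    have hxb := hpos x hx
    exact ((((hasDerivAt_id' x).add_const b).add_const η).fun_inv (by positivity)
      |>.fun_sub (((hasDerivAt_id' x).add_const b).fun_inv hxb.ne')).congr_deriv (by ring)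
  refine ConvexOn.congr ?_ hsplit
  refine convexOn_of_hasDerivWithinAt2_nonneg (convex_Ioi _)
    (f' := fun x => (x + b + η)⁻¹ - (x + b)⁻¹)
    (f'' := fun x => ((x + b) ^ 2)⁻¹ - ((x + b + η) ^ 2)⁻¹)
    (fun x hx => (hf' x hx).continuousAt.continuousWithinAt) ?_ ?_ ?_ <;> rw [interior_Ioi]
  · exact fun x hx => (hf' x hx).hasDerivWithinAt
  · exact fun x hx => (hf'' x hx).hasDerivWithinAt
  · intro x hx
    have hxb := hpos x hx
    rw [sub_nonneg]
    gcongr (?_ ^ 2)⁻¹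
    linarith

section

variable {Ω : Type*} [MeasurableSpace Ω] {μ : Measure Ω}

theorem log_one_add_div_integral_add_le [IsProbabilityMeasure μ] {T : Ω → ℝ} {η b : ℝ}
    (hη : 0 ≤ η) (hb : 0 < b) (hT : 0 ≤ᵐ[μ] T) (hTi : Integrable T μ)
    (hlog : Integrable (fun ω => Real.log (1 + η / (T ω + b))) μ) :
    Real.log (1 + η / (∫ ω, T ω ∂μ + b)) ≤ ∫ ω, Real.log (1 + η / (T ω + b)) ∂μ := by
  have hconv := convexOn_log_one_add_div_add (b := b) hη
  have hsub : Ici 0 ⊆ Ioi (-b) := Ici_subset_Ioi.2 (neg_lt_zero.2 hb)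
  exact (hconv.subset hsub (convex_Ici 0)).map_integral_le
    ((hconv.continuousOn isOpen_Ioi).mono hsub) isClosed_Ici hT hTi hlog

variable {𝕜 : Type*} [RCLike 𝕜]

theorem integral_norm_sum_sq_of_orthogonal {ι : Type*} (s : Finset ι) {f : ι → Ω → 𝕜}
    (hf : ∀ i ∈ s, MemLp (f i) 2 μ)
    (horth : ∀ i ∈ s, ∀ j ∈ s, i ≠ j → ∫ ω, conj (f i ω) * f j ω ∂μ = 0) :
    ∫ ω, ‖∑ i ∈ s, f i ω‖ ^ 2 ∂μ = ∑ i ∈ s, ∫ ω, ‖f i ω‖ ^ 2 ∂μ := by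
  have hint : ∀ i ∈ s, ∀ j ∈ s, Integrable (fun ω => conj (f i ω) * f j ω) μ :=
    fun i hi j hj => (hf i hi).star.integrable_mul (hf j hj)
  apply RCLike.ofReal_injective (K := 𝕜)
  calc ((∫ ω, ‖∑ i ∈ s, f i ω‖ ^ 2 ∂μ : ℝ) : 𝕜)
      = ∫ ω, conj (∑ i ∈ s, f i ω) * ∑ j ∈ s, f j ω ∂μ := by
        simp only [← integral_ofReal, RCLike.conj_mul, RCLike.ofReal_pow]
    _ = ∑ i ∈ s, ∑ j ∈ s, ∫ ω, conj (f i ω) * f j ω ∂μ := by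
        simp only [map_sum, Finset.sum_mul_sum]
        rw [integral_finsetSum _ fun i hi => integrable_finsetSum _ (hint i hi)]
        exact Finset.sum_congr rfl fun i hi => integral_finsetSum _ (hint i hi)
    _ = ∑ i ∈ s, ∫ ω, conj (f i ω) * f i ω ∂μ :=
        Finset.sum_congr rfl fun i hi =>
          Finset.sum_eq_single_of_mem i hi fun j hj hji => horth i hi j hj hji.symm
    _ = ((∑ i ∈ s, ∫ ω, ‖f i ω‖ ^ 2 ∂μ : ℝ) : 𝕜) := by
        simp only [RCLike.ofReal_sum, ← integral_ofReal, RCLike.conj_mul, RCLike.ofReal_pow]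

theorem ProbabilityTheory.IndepFun.memLp_two_mul {X Y : Ω → 𝕜} (h : IndepFun X Y μ)
    (hX : MemLp X 2 μ) (hY : MemLp Y 2 μ) : MemLp (X * Y) 2 μ := by
  have hnorm : IndepFun (fun ω => ‖X ω‖ ^ 2) (fun ω => ‖Y ω‖ ^ 2) μ :=
    h.comp (continuous_norm.pow 2).measurable (continuous_norm.pow 2).measurable
  refine (memLp_two_iff_integrable_sq_norm (hX.1.mul hY.1)).2 ?_
  simpa only [Pi.mul_def, norm_mul, mul_pow] using
    hnorm.integrable_mul (hX.integrable_norm_pow two_ne_zero) (hY.integrable_norm_pow two_ne_zero)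

section IndependentSymbols

variable {ι : Type*} {a x : ι → Ω → 𝕜}

theorem memLp_two_mul_of_indepFun (ha : ∀ i, MemLp (a i) 2 μ) (hx : ∀ i, MemLp (x i) 2 μ)
    (hxa : IndepFun (fun ω i => x i ω) (fun ω i => a i ω) μ) (i : ι) :
    MemLp (fun ω => a i ω * x i ω) 2 μ :=
  (hxa.comp (measurable_pi_apply i) (measurable_pi_apply i)).symm.memLp_two_mul (ha i) (hx i)

variable [Fintype ι]

theorem integrable_norm_sum_mul_sq (ha : ∀ i, MemLp (a i) 2 μ) (hx : ∀ i, MemLp (x i) 2 μ)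
    (hxa : IndepFun (fun ω i => x i ω) (fun ω i => a i ω) μ) :
    Integrable (fun ω => ‖∑ i, a i ω * x i ω‖ ^ 2) μ := by
  have hsum := memLp_finsetSum Finset.univ fun i _ => memLp_two_mul_of_indepFun ha hx hxa i
  exact (memLp_two_iff_integrable_sq_norm hsum.1).1 hsum

theorem integral_norm_sum_mul_sq (ha : ∀ i, MemLp (a i) 2 μ) (hx : ∀ i, MemLp (x i) 2 μ)
    (hxa : IndepFun (fun ω i => x i ω) (fun ω i => a i ω) μ)
    (hxx : Pairwise fun i j => IndepFun (x i) (x j) μ) (hmean : ∀ i, ∫ ω, x i ω ∂μ = 0) :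
    ∫ ω, ‖∑ i, a i ω * x i ω‖ ^ 2 ∂μ =
      ∑ i, (∫ ω, ‖a i ω‖ ^ 2 ∂μ) * ∫ ω, ‖x i ω‖ ^ 2 ∂μ := by
  have hconj : Measurable (conj : 𝕜 → 𝕜) := RCLike.continuous_conj.measurable
  have horth : ∀ i j, i ≠ j → ∫ ω, conj (x i ω) * x j ω ∂μ = 0 := fun i j hij => by
    have := ((hxx hij).comp hconj measurable_id)
      |>.integral_fun_mul_eq_mul_integral (hx i).1.star (hx j).1
    simpa [Function.comp_def, hmean j] using this
  refine (integral_norm_sum_sq_of_orthogonal _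
    (fun i _ => memLp_two_mul_of_indepFun ha hx hxa i) fun i _ j _ hij => ?_).trans
    (Finset.sum_congr rfl fun i _ => ?_)
  · have hsplit := (hxa.comp (φ := fun v : ι → 𝕜 => conj (v i) * v j)
      (ψ := fun v : ι → 𝕜 => conj (v i) * v j) (by fun_prop) (by fun_prop)).symm
      |>.integral_fun_mul_eq_mul_integral ((ha i).1.star.mul (ha j).1)
        ((hx i).1.star.mul (hx j).1)
    simp only [Function.comp_def] at hsplit
    simp only [map_mul, mul_mul_mul_comm, hsplit, horth i j hij, mul_zero]
  · have hsplit := (hxa.comp (φ := fun v : ι → 𝕜 => ‖v i‖ ^ 2)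
      (ψ := fun v : ι → 𝕜 => ‖v i‖ ^ 2) (by fun_prop) (by fun_prop)).symm
      |>.integral_fun_mul_eq_mul_integral (by exact (ha i).1.norm.pow 2)
        (by exact (hx i).1.norm.pow 2)
    simp only [Function.comp_def] at hsplit
    simp only [norm_mul, mul_pow, hsplit]

end IndependentSymbols

end

theorem stmt7_general {Ω : Type*} [MeasurableSpace Ω] (μ : Measure Ω) [IsProbabilityMeasure μ]
    (K J : ℕ) (η σ2 : ℝ) (hη : 0 < η) (hσ2 : 0 < σ2)
    (e : Fin K → Ω → ℂ) (c : Fin J → ℂ) (s : Fin K → Ω → ℂ) (u : Fin J → Ω → ℂ)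
    (hsMeas : ∀ i, Measurable (s i))
    (huMeas : ∀ j, Measurable (u j))
    (heL2 : ∀ i, MemLp (e i) 2 μ)
    (hIndepAll : iIndepFun (Sum.elim s u) μ)
    (hIndepE : IndepFun (fun ω => fun x : Fin K ⊕ Fin J => Sum.elim s u x ω)
      (fun ω => fun i => e i ω) μ)
    (hsMean : ∀ i, ∫ ω, s i ω ∂μ = 0) (huMean : ∀ j, ∫ ω, u j ω ∂μ = 0)
    (hsVar : ∀ i, ∫ ω, ‖s i ω‖ ^ 2 ∂μ = 1) (huVar : ∀ j, ∫ ω, ‖u j ω‖ ^ 2 ∂μ = 1)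
    (hlogInt : Integrable (fun ω => Real.log (1 + η /
      (‖∑ i, e i ω * s i ω‖ ^ 2 + ‖∑ j, c j * u j ω‖ ^ 2 + σ2))) μ) :
    Real.logb 2 (1 + η / (∑ i, ∫ ω, ‖e i ω‖ ^ 2 ∂μ + ∑ j, ‖c j‖ ^ 2 + σ2)) ≤
      ∫ ω, Real.logb 2 (1 + η /
        (‖∑ i, e i ω * s i ω‖ ^ 2 + ‖∑ j, c j * u j ω‖ ^ 2 + σ2)) ∂μ := by
  have hs i : MemLp (s i) 2 μ :=
    (memLp_two_iff_integrable_sq_norm (hsMeas i).aestronglyMeasurable).2 <|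
      .of_integral_ne_zero (by simp [hsVar i])
  have hu j : MemLp (u j) 2 μ :=
    (memLp_two_iff_integrable_sq_norm (huMeas j).aestronglyMeasurable).2 <|
      .of_integral_ne_zero (by simp [huVar j])
  have hc : ∀ j, MemLp (fun _ : Ω => c j) 2 μ := fun j => memLp_const (c j)
  have hse : IndepFun (fun ω i => s i ω) (fun ω i => e i ω) μ :=
    hIndepE.comp (measurable_pi_lambda _ fun i => measurable_pi_apply (Sum.inl i)) measurable_id
  have huc : IndepFun (fun ω j => u j ω) (fun _ j => c j) μ := indepFun_const_right _ c
  have hES := integral_norm_sum_mul_sq heL2 hs hse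
    (fun i j hij => hIndepAll.indepFun (Sum.inl_injective.ne hij)) hsMean
  have hEU := integral_norm_sum_mul_sq hc hu huc
    (fun i j hij => hIndepAll.indepFun (Sum.inr_injective.ne hij)) huMean
  have hSi := integrable_norm_sum_mul_sq heL2 hs hse
  have hUi := integrable_norm_sum_mul_sq hc hu huc
  have jensen := log_one_add_div_integral_add_le hη.le hσ2
    (ae_of_all _ fun ω => by dsimp; positivity) (hSi.add hUi) hlogInt
  simp only [Pi.add_apply, integral_add hSi hUi, hES, hEU, hsVar, huVar, mul_one, integral_const,
    probReal_univ, one_smul] at jensen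
  simp only [Real.logb, integral_div]
  exact div_le_div_of_nonneg_right jensen (Real.log_nonneg one_le_two)

/-- **Closed-form lower bound on the downlink achievable rate (Theorem 2, abstract form).**
With square-integrable error coefficients `e_i`, constants `c_j`, and zero-mean
unit-variance symbols `s_i`, `u_j` that are mutually independent and independent of the
`e_i`, the achievable rate `E[log₂(1 + η / (|∑ e_i s_i|² + |∑ c_j u_j|² + σ²))]` is at
least `log₂(1 + η / (∑ E|e_i|² + ∑ |c_j|² + σ²))`. -/
theorem stmt7 {Ω : Type*} [MeasurableSpace Ω] (μ : Measure Ω) [IsProbabilityMeasure μ]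
    (K J : ℕ) (hK : 0 < K) (hJ : 0 < J) (η σ2 : ℝ) (hη : 0 < η) (hσ2 : 0 < σ2)
    (e : Fin K → Ω → ℂ) (c : Fin J → ℂ) (s : Fin K → Ω → ℂ) (u : Fin J → Ω → ℂ)
    (heMeas : ∀ i, Measurable (e i)) (hsMeas : ∀ i, Measurable (s i))
    (huMeas : ∀ j, Measurable (u j))
    (heL2 : ∀ i, MemLp (e i) 2 μ)
    (hIndepAll : iIndepFun (Sum.elim s u) μ)
    (hIndepE : IndepFun (fun ω => fun x : Fin K ⊕ Fin J => Sum.elim s u x ω)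
      (fun ω => fun i => e i ω) μ)
    (hsMean : ∀ i, ∫ ω, s i ω ∂μ = 0) (huMean : ∀ j, ∫ ω, u j ω ∂μ = 0)
    (hsVar : ∀ i, ∫ ω, ‖s i ω‖ ^ 2 ∂μ = 1) (huVar : ∀ j, ∫ ω, ‖u j ω‖ ^ 2 ∂μ = 1)
    (hlogInt : Integrable (fun ω => Real.log (1 + η /
      (‖∑ i, e i ω * s i ω‖ ^ 2 + ‖∑ j, c j * u j ω‖ ^ 2 + σ2))) μ) :
    Real.logb 2 (1 + η / (∑ i, ∫ ω, ‖e i ω‖ ^ 2 ∂μ + ∑ j, ‖c j‖ ^ 2 + σ2)) ≤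
      ∫ ω, Real.logb 2 (1 + η /
        (‖∑ i, e i ω * s i ω‖ ^ 2 + ‖∑ j, c j * u j ω‖ ^ 2 + σ2)) ∂μ :=
  stmt7_general μ K J η σ2 hη hσ2 e c s u hsMeas huMeas heL2 hIndepAll hIndepE hsMean huMean hsVar
    huVar hlogInt
end

section
/- Let n be a positive integer, c > 0 and P > 0 real numbers, and y : Fin n → ℝ with y_i > 0 for all i. Define T := (c·P + ∑_j y_j)/n and x*_i := (T − y_i)/c, and assume x*_i ≥ 0 for all i. Then: (1) ∑_i x*_i = P; (2) y_i + c·x*_i = T for all i; (3) ∑_i 1/(y_i + c·x*_i) = n²/(∑_j y_j + c·P); and (4) for every x : Fin n → ℝ with x_i ≥ 0 for all i and ∑_i x_i ≤ P, ∑_i 1/(y_i + c·x*_i) ≤ ∑_i 1/(y_i + c·x_i). In other words, x* is a global minimizer of the water-filling objective over the feasible set. -/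
/-!
The level `T` is chosen so that the total budget is spent exactly, `n T = ∑ y_j + c P`, and every
term of the objective at `x*` equals `1 / T`. Optimality is the harmonic–arithmetic mean
inequality `n² / ∑ a_i ≤ ∑ 1 / a_i` applied to `a_i = y_i + c x_i`, whose sum is at most
`∑ y_j + c P` for every feasible `x`.
-/

open Finset

theorem card_sq_div_sum_le_sum_one_div {ι : Type*} (s : Finset ι) {a : ι → ℝ}
    (ha : ∀ i ∈ s, 0 < a i) : (#s : ℝ) ^ 2 / ∑ i ∈ s, a i ≤ ∑ i ∈ s, 1 / a i := by
  simpa using sq_sum_div_le_sum_sq_div s (fun _ ↦ (1 : ℝ)) ha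

section WaterFilling

variable {ι : Type*} [Fintype ι] {c P : ℝ} {y : ι → ℝ}

theorem sum_sub_div_eq_of_level_eq {T : ℝ} (hc : c ≠ 0) (hι : (Fintype.card ι : ℝ) ≠ 0)
    (hT : T = (c * P + ∑ j, y j) / Fintype.card ι) : ∑ i, (T - y i) / c = P := by
  rw [← sum_div, sum_sub_distrib, sum_const, card_univ, nsmul_eq_mul, hT,
    mul_div_cancel₀ _ hι, add_sub_cancel_right, mul_div_cancel_left₀ _ hc]

theorem sum_add_mul_le_of_sum_le {x : ι → ℝ} (hc : 0 ≤ c) (hx : ∑ i, x i ≤ P) :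
    ∑ i, (y i + c * x i) ≤ ∑ j, y j + c * P := by
  rw [sum_add_distrib, ← mul_sum]
  gcongr

theorem card_sq_div_le_sum_one_div_add_mul [Nonempty ι] {x : ι → ℝ} (hc : 0 ≤ c)
    (hy : ∀ i, 0 < y i) (hx : ∀ i, 0 ≤ x i) (hxP : ∑ i, x i ≤ P) :
    (Fintype.card ι : ℝ) ^ 2 / (∑ j, y j + c * P) ≤ ∑ i, 1 / (y i + c * x i) := by
  have hpos : ∀ i, 0 < y i + c * x i := fun i ↦ add_pos_of_pos_of_nonneg (hy i) (mul_nonneg hc (hx i))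
  calc (Fintype.card ι : ℝ) ^ 2 / (∑ j, y j + c * P)
      ≤ (Fintype.card ι : ℝ) ^ 2 / ∑ i, (y i + c * x i) :=
        div_le_div_of_nonneg_left (by positivity) (sum_pos (fun i _ ↦ hpos i) univ_nonempty)
          (sum_add_mul_le_of_sum_le hc hxP)
    _ ≤ ∑ i, 1 / (y i + c * x i) := by
        simpa using card_sq_div_sum_le_sum_one_div univ (fun i _ ↦ hpos i)

end WaterFilling

theorem stmt9_general (n : ℕ) (hn : 0 < n) (c P : ℝ) (hc : 0 < c)
    (y : Fin n → ℝ) (hy : ∀ i, 0 < y i)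
    (T : ℝ) (hT : T = (c * P + ∑ j, y j) / n)
    (xs : Fin n → ℝ) (hxs : xs = fun i => (T - y i) / c) :
    (∑ i, xs i = P) ∧ (∀ i, y i + c * xs i = T) ∧
    (∑ i, 1 / (y i + c * xs i) = (n : ℝ) ^ 2 / (∑ j, y j + c * P)) ∧
    (∀ x : Fin n → ℝ, (∀ i, 0 ≤ x i) → ∑ i, x i ≤ P →
      ∑ i, 1 / (y i + c * xs i) ≤ ∑ i, 1 / (y i + c * x i)) := by
  have : NeZero n := ⟨hn.ne'⟩
  have hn0 : (n : ℝ) ≠ 0 := by positivity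
  have hlevel : ∀ i, y i + c * xs i = T := fun i ↦ by
    rw [hxs, mul_div_cancel₀ _ hc.ne', add_sub_cancel]
  have hbudget : ∑ j, y j + c * P = n * T := by
    rw [hT, mul_div_cancel₀ _ hn0, add_comm]
  have hobj : ∑ i, 1 / (y i + c * xs i) = (n : ℝ) ^ 2 / (∑ j, y j + c * P) := by
    simp only [hlevel, sum_const, card_univ, Fintype.card_fin, nsmul_eq_mul, hbudget, sq,
      mul_div_mul_left _ _ hn0, mul_one_div]
  refine ⟨?_, hlevel, hobj, fun x hx hxP ↦ ?_⟩
  · rw [hxs]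
    exact sum_sub_div_eq_of_level_eq hc.ne' (by simpa using hn0) (by simpa using hT)
  · rw [hobj]
    simpa using card_sq_div_le_sum_one_div_add_mul hc.le hy hx hxP

/-- **The KKT water-filling solution (equation (KKT) of Appendix A).** With
`T = (c P + ∑ y_j)/n` and `x*_i = (T - y_i)/c`, if all `x*_i ≥ 0` then `x*` is feasible
(`∑ x*_i = P`), attains the common level `y_i + c x*_i = T`, its objective value equals
`n² / (∑ y_j + c P)`, and `x*` globally minimizes `∑ 1/(y_i + c x_i)` over the feasible
set. -/
theorem stmt9 (n : ℕ) (hn : 0 < n) (c P : ℝ) (hc : 0 < c) (hP : 0 < P)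
    (y : Fin n → ℝ) (hy : ∀ i, 0 < y i)
    (T : ℝ) (hT : T = (c * P + ∑ j, y j) / n)
    (xs : Fin n → ℝ) (hxs : xs = fun i => (T - y i) / c)
    (hnonneg : ∀ i, 0 ≤ xs i) :
    (∑ i, xs i = P) ∧ (∀ i, y i + c * xs i = T) ∧
    (∑ i, 1 / (y i + c * xs i) = (n : ℝ) ^ 2 / (∑ j, y j + c * P)) ∧
    (∀ x : Fin n → ℝ, (∀ i, 0 ≤ x i) → ∑ i, x i ≤ P →
      ∑ i, 1 / (y i + c * xs i) ≤ ∑ i, 1 / (y i + c * x i)) :=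
  stmt9_general n hn c P hc y hy T hT xs hxs
end

section
/- Let n be a positive integer and let A, B be n×n Hermitian positive semidefinite complex matrices with A positive definite. Let a_1 ≥ a_2 ≥ … ≥ a_n be the eigenvalues of A sorted in decreasing order and b_1 ≤ b_2 ≤ … ≤ b_n the eigenvalues of B sorted in increasing order. Then A + B is positive definite and Re Tr((A + B)⁻¹) ≥ ∑_{i=1}^n 1/(a_i + b_i). -/
/-!
Let `z` be the eigenvalues of `A + B` in decreasing order. For every real `t` and every index
set `P`, the operator `H = A - (A + B - t)⁺` lies below both `A` and `t - B`, so by Weyl's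
monotonicity its decreasing eigenvalues are bounded by `a i` and by `t - b i`; this is where
`a` must decrease and `b` increase. Since `Tr (A - H) = ∑ j (z j - t)⁺`, this gives
`∑ i ∈ P, (a i + b i) ≤ #P * t + ∑ j (z j - t)⁺`, and `t = z_{#P - 1}` turns the right-hand side
into the sum of the `#P` largest `z j`. With `∑ (a i + b i) = Tr (A + B) = ∑ z j`, the vector
`a + b` is majorized by `z`, and Karamata's inequality for the convex function `x ↦ 1/x`
(tangent lines plus Abel summation) gives `∑ 1/(a i + b i) ≤ ∑ 1/z j = Tr (A + B)⁻¹`.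
-/

open Finset Matrix Module RCLike
open scoped ComplexConjugate ComplexOrder InnerProductSpace

section Majorization

variable {n : ℕ}

theorem sum_mul_le_sum_mul_of_sum_Iic_nonneg {e w : Fin n → ℝ} (hw : Monotone w) {W : ℝ}
    (hW : ∀ i, w i ≤ W) (he : ∀ k, 0 ≤ ∑ i ∈ Iic k, e i) :
    ∑ i, e i * w i ≤ (∑ i, e i) * W := by
  induction n generalizing W with
  | zero => simp
  | succ n ih =>
    have he' : ∀ k : Fin n, 0 ≤ ∑ i ∈ Iic k, e i.castSucc := fun k => by
      simpa [← Fin.map_castSuccEmb_Iic] using he k.castSucc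
    have hprefix := ih (w := fun i => w i.castSucc) (hw.comp Fin.strictMono_castSucc.monotone)
      (fun i => hw (Fin.castSucc_lt_last i).le) he'
    have htot : 0 ≤ ∑ i, e i := by simpa [← Fin.top_eq_last, Iic_top] using he (Fin.last n)
    simp only [Fin.sum_univ_castSucc] at htot ⊢
    calc ∑ i : Fin n, e i.castSucc * w i.castSucc + e (Fin.last n) * w (Fin.last n)
        ≤ (∑ i : Fin n, e i.castSucc + e (Fin.last n)) * w (Fin.last n) := by
          rw [add_mul]; linarith
      _ ≤ (∑ i : Fin n, e i.castSucc + e (Fin.last n)) * W :=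
          mul_le_mul_of_nonneg_left (hW _) htot

theorem inv_sub_inv_le_sub_mul_inv_sq {x y : ℝ} (hx : 0 < x) (hy : 0 < y) :
    x⁻¹ - y⁻¹ ≤ (y - x) * (x ^ 2)⁻¹ := by
  have hgap : (y - x) * (x ^ 2)⁻¹ - (x⁻¹ - y⁻¹) = (y - x) ^ 2 / (x ^ 2 * y) := by
    field_simp
  have : 0 ≤ (y - x) ^ 2 / (x ^ 2 * y) := by positivity
  linarith

theorem sum_inv_le_sum_inv_of_sum_Iic_le {d z : Fin n → ℝ} (hd : Antitone d)
    (hd₀ : ∀ i, 0 < d i) (hz₀ : ∀ i, 0 < z i)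
    (hpre : ∀ k, ∑ i ∈ Iic k, d i ≤ ∑ i ∈ Iic k, z i) (htot : ∑ i, d i = ∑ i, z i) :
    ∑ i, (d i)⁻¹ ≤ ∑ i, (z i)⁻¹ := by
  have hw : Monotone fun i => (d i ^ 2)⁻¹ := fun i j hij =>
    inv_anti₀ (pow_pos (hd₀ j) 2) (pow_le_pow_left₀ (hd₀ j).le (hd hij) 2)
  have habel := sum_mul_le_sum_mul_of_sum_Iic_nonneg hw
    (fun i => single_le_sum (fun j _ => (inv_pos.2 (pow_pos (hd₀ j) 2)).le) (mem_univ i))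
    (e := fun i => z i - d i) (fun k => by simpa [sum_sub_distrib] using hpre k)
  rw [sum_sub_distrib, htot, sub_self, zero_mul] at habel
  have htangent : ∑ i, ((d i)⁻¹ - (z i)⁻¹) ≤ ∑ i, (z i - d i) * (d i ^ 2)⁻¹ :=
    sum_le_sum fun i _ => inv_sub_inv_le_sub_mul_inv_sq (hd₀ i) (hz₀ i)
  rw [sum_sub_distrib] at htangent
  linarith

theorem antitone_comp_revPerm_trans_sort (c : Fin n → ℝ) :
    Antitone (c ∘ Fin.revPerm.trans (Tuple.sort c)) := fun _ _ hij =>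
  Tuple.monotone_sort c (Fin.rev_le_rev.2 hij)

theorem sum_inv_le_sum_inv_of_forall_sum_le_sum_Iic {c z : Fin n → ℝ} (hc₀ : ∀ i, 0 < c i)
    (hz₀ : ∀ i, 0 < z i)
    (hmaj : ∀ (k : Fin n) (P : Finset (Fin n)), #P = k + 1 → ∑ i ∈ P, c i ≤ ∑ i ∈ Iic k, z i)
    (htot : ∑ i, c i = ∑ i, z i) :
    ∑ i, (c i)⁻¹ ≤ ∑ i, (z i)⁻¹ := by
  set π := Fin.revPerm.trans (Tuple.sort c)
  rw [← Equiv.sum_comp π fun i => (c i)⁻¹]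
  refine sum_inv_le_sum_inv_of_sum_Iic_le (antitone_comp_revPerm_trans_sort c) (fun i => hc₀ _)
    hz₀ (fun k => ?_) (by rw [← htot]; exact Equiv.sum_comp π c)
  simpa using hmaj k ((Iic k).map π.toEmbedding) (by simp)

theorem Antitone.sum_Iic_eq_mul_add_sum_max {z : Fin n → ℝ} (hz : Antitone z) (k : Fin n) :
    ∑ i ∈ Iic k, z i = (k + 1) * z k + ∑ i, max (z i - z k) 0 := by
  have hmax : ∀ i, max (z i - z k) 0 = if i ≤ k then z i - z k else 0 := fun i => by
    split_ifs with h
    · exact max_eq_left (sub_nonneg.2 (hz h))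
    · exact max_eq_right (sub_nonpos.2 (hz (not_le.1 h).le))
  simp_rw [hmax, ← sum_filter, filter_ge_eq_Iic, sum_sub_distrib, sum_const, Fin.card_Iic,
    nsmul_eq_mul]
  push_cast
  ring

end Majorization

section Eigenbasis

variable {𝕜 E ι : Type*} [RCLike 𝕜] [NormedAddCommGroup E] [InnerProductSpace 𝕜 E] [Fintype ι]

theorem OrthonormalBasis.inner_eq_zero_of_mem_span (w : OrthonormalBasis ι 𝕜 E) {s : Set ι}
    {v : E} (hv : v ∈ Submodule.span 𝕜 (w '' s)) {i : ι} (hi : i ∉ s) :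
    ⟪w i, v⟫_𝕜 = 0 := by
  have hsupp := w.toBasis.mem_span_image.1 (by simpa using hv)
  rw [← w.repr_apply_apply]
  simpa using Finsupp.notMem_support_iff.1 fun h => hi (hsupp h)

theorem OrthonormalBasis.finrank_span_image (w : OrthonormalBasis ι 𝕜 E) (s : Finset ι) :
    finrank 𝕜 (Submodule.span 𝕜 (w '' s)) = #s := by
  rw [Set.image_eq_range, finrank_span_eq_card (b := fun i : (s : Set ι) => w i)
    (w.orthonormal.linearIndependent.comp _ Subtype.val_injective)]
  simp

def IsEigenbasis (T : E →ₗ[𝕜] E) (w : OrthonormalBasis ι 𝕜 E) (f : ι → ℝ) : Prop :=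
  ∀ i, T (w i) = (f i : 𝕜) • w i

theorem exists_isEigenbasis [DecidableEq ι] (w : OrthonormalBasis ι 𝕜 E) (f : ι → ℝ) :
    ∃ T : E →ₗ[𝕜] E, IsEigenbasis T w f :=
  ⟨w.toBasis.constr 𝕜 fun i => (f i : 𝕜) • w i, fun i => by simp⟩

theorem isEigenbasis_smul_id (t : ℝ) (w : OrthonormalBasis ι 𝕜 E) :
    IsEigenbasis ((t : 𝕜) • LinearMap.id) w fun _ => t := fun _ => rfl

theorem LinearMap.IsSymmetric.isEigenbasis [FiniteDimensional 𝕜 E] {n : ℕ} {T : E →ₗ[𝕜] E}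
    (hT : T.IsSymmetric) (hn : finrank 𝕜 E = n) :
    IsEigenbasis T (hT.eigenvectorBasis hn) (hT.eigenvalues hn) :=
  hT.apply_eigenvectorBasis hn

namespace IsEigenbasis

variable {S T : E →ₗ[𝕜] E} {w : OrthonormalBasis ι 𝕜 E} {f g : ι → ℝ}

theorem add (hS : IsEigenbasis S w f) (hT : IsEigenbasis T w g) :
    IsEigenbasis (S + T) w (f + g) := fun i => by
  simp [hS i, hT i, add_smul]

theorem sub (hS : IsEigenbasis S w f) (hT : IsEigenbasis T w g) :
    IsEigenbasis (S - T) w (f - g) := fun i => by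
  simp [hS i, hT i, sub_smul]

theorem apply_eq_sum (hT : IsEigenbasis T w f) (v : E) :
    T v = ∑ i, (f i * ⟪w i, v⟫_𝕜) • w i := by
  conv_lhs => rw [← w.sum_repr' v]
  simp only [map_sum, map_smul, hT _, smul_smul, mul_comm]

theorem inner_apply_left (hT : IsEigenbasis T w f) (x y : E) :
    ⟪T x, y⟫_𝕜 = ∑ i, f i * (conj (⟪w i, x⟫_𝕜) * ⟪w i, y⟫_𝕜) := by
  simp only [hT.apply_eq_sum, sum_inner, inner_smul_left, map_mul, conj_ofReal, mul_assoc]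

theorem re_inner_apply_self (hT : IsEigenbasis T w f) (v : E) :
    re (⟪T v, v⟫_𝕜) = ∑ i, f i * ‖⟪w i, v⟫_𝕜‖ ^ 2 := by
  simp only [hT.inner_apply_left, RCLike.conj_mul, ← ofReal_pow, ← ofReal_mul, ← ofReal_sum,
    ofReal_re]

theorem isSymmetric (hT : IsEigenbasis T w f) : T.IsSymmetric := fun x y => by
  rw [← inner_conj_symm x, hT.inner_apply_left, hT.inner_apply_left]
  simp [mul_comm]

theorem isPositive (hT : IsEigenbasis T w f) (hf : ∀ i, 0 ≤ f i) : T.IsPositive :=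
  ⟨hT.isSymmetric, fun v => by
    rw [hT.re_inner_apply_self]
    exact sum_nonneg fun i _ => mul_nonneg (hf i) (sq_nonneg _)⟩

theorem trace_eq (hT : IsEigenbasis T w f) :
    LinearMap.trace 𝕜 E T = ((∑ i, f i : ℝ) : 𝕜) := by
  simp [LinearMap.trace_eq_sum_inner T w, hT _, inner_smul_right, w.orthonormal.1 _]

theorem mul_norm_sq_le_re_inner_of_mem_span (hT : IsEigenbasis T w f) {s : Set ι} {c : ℝ}
    (hc : ∀ i ∈ s, c ≤ f i) {v : E} (hv : v ∈ Submodule.span 𝕜 (w '' s)) :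
    c * ‖v‖ ^ 2 ≤ re ⟪T v, v⟫_𝕜 := by
  rw [hT.re_inner_apply_self, ← w.sum_sq_norm_inner_right, mul_sum]
  refine sum_le_sum fun i _ => ?_
  by_cases hi : i ∈ s
  · exact mul_le_mul_of_nonneg_right (hc i hi) (sq_nonneg _)
  · simp [w.inner_eq_zero_of_mem_span hv hi]

theorem re_inner_le_mul_norm_sq_of_mem_span (hT : IsEigenbasis T w f) {s : Set ι} {c : ℝ}
    (hc : ∀ i ∈ s, f i ≤ c) {v : E} (hv : v ∈ Submodule.span 𝕜 (w '' s)) :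
    re ⟪T v, v⟫_𝕜 ≤ c * ‖v‖ ^ 2 := by
  rw [hT.re_inner_apply_self, ← w.sum_sq_norm_inner_right, mul_sum]
  refine sum_le_sum fun i _ => ?_
  by_cases hi : i ∈ s
  · exact mul_le_mul_of_nonneg_right (hc i hi) (sq_nonneg _)
  · simp [w.inner_eq_zero_of_mem_span hv hi]

theorem le_of_le [FiniteDimensional 𝕜 E] {n : ℕ} {u w : OrthonormalBasis (Fin n) 𝕜 E}
    {f g : Fin n → ℝ} (hS : IsEigenbasis S u f) (hT : IsEigenbasis T w g) (hf : Antitone f)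
    (hg : Antitone g) (hST : S ≤ T) : f ≤ g := by
  intro i
  set V := Submodule.span 𝕜 (u '' ↑(Iic i))
  set W := Submodule.span 𝕜 (w '' ↑(Ici i))
  have hdim : finrank 𝕜 E < finrank 𝕜 V + finrank 𝕜 W := by
    rw [u.finrank_span_image, w.finrank_span_image, Fin.card_Iic, Fin.card_Ici,
      finrank_eq_card_basis u.toBasis, Fintype.card_fin]
    omega
  obtain ⟨v, hvV, hvW, hv⟩ : ∃ v ∈ V, v ∈ W ∧ v ≠ 0 := by
    by_contra! h
    exact hdim.not_ge (Submodule.finrank_add_finrank_le_of_disjoint (Submodule.disjoint_def.2 h))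
  have hSv := hS.mul_norm_sq_le_re_inner_of_mem_span (fun j hj => hf (mem_Iic.1 hj)) hvV
  have hTv := hT.re_inner_le_mul_norm_sq_of_mem_span (fun j hj => hg (mem_Ici.1 hj)) hvW
  have hSTv : re ⟪S v, v⟫_𝕜 ≤ re ⟪T v, v⟫_𝕜 := by
    simpa [inner_sub_left] using ((LinearMap.le_def S T).1 hST).re_inner_nonneg_left v
  exact le_of_mul_le_mul_right (hSv.trans (hSTv.trans hTv)) (by positivity)

end IsEigenbasis

section Lidskii

variable {n : ℕ} {A B : E →ₗ[𝕜] E} {uA uB uM : OrthonormalBasis (Fin n) 𝕜 E}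
  {a b z : Fin n → ℝ}

theorem sum_add_le_card_mul_add_sum_max [FiniteDimensional 𝕜 E] (hA : IsEigenbasis A uA a)
    (hB : IsEigenbasis B uB b) (hM : IsEigenbasis (A + B) uM z) (ha : Antitone a)
    (hb : Monotone b) (P : Finset (Fin n)) (t : ℝ) :
    ∑ i ∈ P, (a i + b i) ≤ #P * t + ∑ j, max (z j - t) 0 := by
  obtain ⟨Y, hY⟩ := exists_isEigenbasis uM fun j => max (z j - t) 0
  have hn : finrank 𝕜 E = n := by simpa using finrank_eq_card_basis uA.toBasis
  have hH : (A - Y).IsSymmetric := hA.isSymmetric.sub hY.isSymmetric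
  set h := hH.eigenvalues hn
  have hHA : h ≤ a := (hH.isEigenbasis hn).le_of_le hA (hH.eigenvalues_antitone hn) ha <| by
    rw [LinearMap.le_def, sub_sub_cancel]
    exact hY.isPositive fun _ => le_max_right _ _
  have hHB : h ≤ fun i => t - b i :=
    (hH.isEigenbasis hn).le_of_le ((isEigenbasis_smul_id t uB).sub hB)
      (hH.eigenvalues_antitone hn) (fun i j hij => sub_le_sub_left (hb hij) t) <| by
    rw [LinearMap.le_def, show (t : 𝕜) • LinearMap.id - B - (A - Y)
      = (t : 𝕜) • LinearMap.id - (A + B) + Y by abel]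
    exact (((isEigenbasis_smul_id t uM).sub hM).add hY).isPositive fun j => by
      simp only [Pi.add_apply, Pi.sub_apply]
      linarith [le_max_left (z j - t) 0]
  have htrace : ∑ i, a i = ∑ i, h i + ∑ j, max (z j - t) 0 := by
    have := congrArg (LinearMap.trace 𝕜 E) (sub_add_cancel A Y)
    rw [map_add, (hH.isEigenbasis hn).trace_eq, hY.trace_eq, hA.trace_eq] at this
    exact_mod_cast this.symm
  calc ∑ i ∈ P, (a i + b i) = ∑ i ∈ P, (h i + b i) + ∑ i ∈ P, (a i - h i) := by
        rw [← sum_add_distrib]; exact sum_congr rfl fun i _ => by ring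
    _ ≤ ∑ i ∈ P, t + ∑ i, (a i - h i) :=
        add_le_add (sum_le_sum fun i _ => by linarith [hHB i])
          (sum_le_sum_of_subset_of_nonneg (subset_univ P) fun i _ _ => sub_nonneg.2 (hHA i))
    _ = #P * t + ∑ j, max (z j - t) 0 := by
        rw [sum_const, nsmul_eq_mul, sum_sub_distrib, htrace]; ring

theorem sum_add_le_sum_Iic [FiniteDimensional 𝕜 E] (hA : IsEigenbasis A uA a)
    (hB : IsEigenbasis B uB b) (hM : IsEigenbasis (A + B) uM z) (ha : Antitone a)
    (hb : Monotone b) (hz : Antitone z) (k : Fin n) (P : Finset (Fin n)) (hP : #P = k + 1) :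
    ∑ i ∈ P, (a i + b i) ≤ ∑ i ∈ Iic k, z i := by
  rw [Antitone.sum_Iic_eq_mul_add_sum_max hz k]
  exact_mod_cast sum_add_le_card_mul_add_sum_max hA hB hM ha hb P (z k) |>.trans_eq (by rw [hP])

theorem sum_add_eq_sum (hA : IsEigenbasis A uA a) (hB : IsEigenbasis B uB b)
    (hM : IsEigenbasis (A + B) uM z) : ∑ i, (a i + b i) = ∑ i, z i := by
  have := hM.trace_eq
  rw [map_add, hA.trace_eq, hB.trace_eq] at this
  rw [sum_add_distrib]
  exact_mod_cast this

end Lidskii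

end Eigenbasis

section Matrix

variable {𝕜 ι : Type*} [RCLike 𝕜] [Fintype ι] [DecidableEq ι]

theorem Matrix.IsHermitian.isEigenbasis_reindex {A : Matrix ι ι 𝕜} (hA : A.IsHermitian)
    (σ : Equiv.Perm ι) :
    IsEigenbasis (toEuclideanLin A) (hA.eigenvectorBasis.reindex σ.symm) (hA.eigenvalues ∘ σ) :=
  fun i => by
    rw [OrthonormalBasis.reindex_apply, Equiv.symm_symm, toLpLin_apply,
      hA.mulVec_eigenvectorBasis, WithLp.toLp_smul, WithLp.toLp_ofLp,
      RCLike.real_smul_eq_coe_smul (K := 𝕜)]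
    rfl

theorem Matrix.trace_inv_eq_sum_inv {M : Matrix ι ι 𝕜}
    {w : OrthonormalBasis ι 𝕜 (EuclideanSpace 𝕜 ι)} {z : ι → ℝ}
    (hM : IsEigenbasis (toEuclideanLin M) w z) (hz : ∀ i, z i ≠ 0) :
    M⁻¹.trace = ((∑ i, (z i)⁻¹ : ℝ) : 𝕜) := by
  obtain ⟨N, hN⟩ := exists_isEigenbasis w fun i => (z i)⁻¹
  have hMN : M * toEuclideanLin.symm N = 1 := toEuclideanLin.injective <| w.toBasis.ext fun i => by
    simp only [OrthonormalBasis.coe_toBasis, toLpLin_mul_same, LinearMap.comp_apply,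
      LinearEquiv.apply_symm_apply, hN i, map_smul, hM i, smul_smul, ← ofReal_mul,
      inv_mul_cancel₀ (hz i), ofReal_one, one_smul, toLpLin_one, LinearMap.id_apply]
  rw [inv_eq_right_inv hMN, ← trace_toLin_eq _ (PiLp.basisFun 2 𝕜 ι), ← toLpLin_eq_toLin,
    LinearEquiv.apply_symm_apply, hN.trace_eq]

end Matrix

theorem stmt10_general {n : ℕ} (A B : Matrix (Fin n) (Fin n) ℂ)
    (hA : A.PosDef) (hB : B.PosSemidef)
    (a b : Fin n → ℝ) (ha_anti : Antitone a) (hb_mono : Monotone b)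
    (σA σB : Equiv.Perm (Fin n))
    (ha_eig : a = hA.isHermitian.eigenvalues ∘ σA)
    (hb_eig : b = hB.isHermitian.eigenvalues ∘ σB) :
    (A + B).PosDef ∧ ∑ i, 1 / (a i + b i) ≤ (Matrix.trace (A + B)⁻¹).re := by
  have hM : (A + B).PosDef := hA.add_posSemidef hB
  refine ⟨hM, ?_⟩
  set σM := Fin.revPerm.trans (Tuple.sort hM.isHermitian.eigenvalues)
  set z := hM.isHermitian.eigenvalues ∘ σM
  have hEA := hA.isHermitian.isEigenbasis_reindex σA
  have hEB := hB.isHermitian.isEigenbasis_reindex σB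
  have hEM := hM.isHermitian.isEigenbasis_reindex σM
  rw [← ha_eig] at hEA
  rw [← hb_eig] at hEB
  have hz₀ : ∀ i, 0 < z i := fun i => hM.eigenvalues_pos _
  have hc₀ : ∀ i, 0 < a i + b i := fun i => by
    rw [ha_eig, hb_eig]
    exact add_pos_of_pos_of_nonneg (hA.eigenvalues_pos _) (hB.eigenvalues_nonneg _)
  rw [trace_inv_eq_sum_inv hEM fun i => (hz₀ i).ne', ← RCLike.re_to_complex,
    RCLike.ofReal_re]
  rw [map_add] at hEM
  simpa only [one_div] using sum_inv_le_sum_inv_of_forall_sum_le_sum_Iic hc₀ hz₀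
    (sum_add_le_sum_Iic hEA hEB hEM ha_anti hb_mono (antitone_comp_revPerm_trans_sort _))
    (sum_add_eq_sum hEA hEB hEM)

/-- **Trace-of-inverse eigenvalue pairing bound.** For `A` Hermitian positive definite
and `B` Hermitian positive semidefinite, with `a` the eigenvalues of `A` sorted in
decreasing order and `b` the eigenvalues of `B` sorted in increasing order, `A + B` is
positive definite and `Re Tr((A + B)⁻¹) ≥ ∑ i 1/(a_i + b_i)`. -/
theorem stmt10 {n : ℕ} (hn : 0 < n) (A B : Matrix (Fin n) (Fin n) ℂ)
    (hA : A.PosDef) (hB : B.PosSemidef)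
    (a b : Fin n → ℝ) (ha_anti : Antitone a) (hb_mono : Monotone b)
    (σA σB : Equiv.Perm (Fin n))
    (ha_eig : a = hA.isHermitian.eigenvalues ∘ σA)
    (hb_eig : b = hB.isHermitian.eigenvalues ∘ σB) :
    (A + B).PosDef ∧ ∑ i, 1 / (a i + b i) ≤ (Matrix.trace (A + B)⁻¹).re :=
  stmt10_general A B hA hB a b ha_anti hb_mono σA σB ha_eig hb_eig
end
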